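/- arXiv:2410.23459 — 2 statements merged into one kernel-verified Lean document; each statement's English description precedes it below -/
import Mathlib

section
/- Let X = {x₀, x₁, x₂} ⊆ ℤ⁵ where x₀ = (0,0,0,0,0), x₁ = (2,0,0,0,0), x₂ = (1,1,1,1,1), with the Euclidean metric d, and define f : X → X by f(x₀) = x₀, f(x₁) = x₀, f(x₂) = x₁. Then: (i) d(x₀,x₁) = 2 and d(x₀,x₂) = d(x₁,x₂) = √5; (ii) X is c₅-connected, and every pair of c₅-adjacent points of X is at Euclidean distance √5 (i.e., X is uniformly c₅-connected); (iii) d(f x, f y) ≤ (2/√5) d(x,y) for all x, y ∈ X, so f is a digital contraction; (iv) f is not c₅-continuous; and (v) the image f(X) = {x₀, x₁} has exactly two elements. -/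
/-- Euclidean distance on `ℤⁿ`. -/
noncomputable def eDist {n : ℕ} (x y : Fin n → ℤ) : ℝ :=
  Real.sqrt (∑ i, ((x i - y i : ℤ) : ℝ) ^ 2)

/-- `c_u`-adjacency on `ℤⁿ`. -/
def cAdj {n : ℕ} (u : ℕ) (x y : Fin n → ℤ) : Prop :=
  x ≠ y ∧
  (Finset.univ.filter fun i => |x i - y i| = 1).card ≤ u ∧
  ∀ j, |x j - y j| ≠ 1 → x j = y j

/-- `x₀ = (0,0,0,0,0)`. -/
def p0 : Fin 5 → ℤ := fun _ => 0

/-- `x₁ = (2,0,0,0,0)`. -/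
def p1 : Fin 5 → ℤ := fun i => if i = 0 then 2 else 0

/-- `x₂ = (1,1,1,1,1)`. -/
def p2 : Fin 5 → ℤ := fun _ => 1

/-- `X = {x₀, x₁, x₂} ⊆ ℤ⁵`. -/
def X13 : Set (Fin 5 → ℤ) := {p0, p1, p2}

/-- `f(x₀) = x₀`, `f(x₁) = x₀`, `f(x₂) = x₁`. -/
def f13 : (Fin 5 → ℤ) → (Fin 5 → ℤ) := fun p => if p = p2 then p1 else p0

lemma adj02 : cAdj 5 p0 p2 := by unfold cAdj; decide
lemma adj20 : cAdj 5 p2 p0 := by unfold cAdj; decide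
lemma adj12 : cAdj 5 p1 p2 := by unfold cAdj; decide
lemma adj21 : cAdj 5 p2 p1 := by unfold cAdj; decide
lemma nadj01 : ¬ cAdj 5 p0 p1 := by unfold cAdj; decide
lemma nadj10 : ¬ cAdj 5 p1 p0 := by unfold cAdj; decide
lemma ne01 : p0 ≠ p1 := by decide
lemma ne02 : p0 ≠ p2 := by decide
lemma ne12 : p1 ≠ p2 := by decide

lemma eDist_self {n : ℕ} (x : Fin n → ℤ) : eDist x x = 0 := by
  simp [eDist]

lemma eDist_comm {n : ℕ} (x y : Fin n → ℤ) : eDist x y = eDist y x := by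
  unfold eDist
  congr 1
  apply Finset.sum_congr rfl
  intro i _
  push_cast
  ring

lemma dist01 : eDist p0 p1 = 2 := by
  have : eDist p0 p1 = Real.sqrt 4 := by
    unfold eDist
    congr 1
    simp [Fin.sum_univ_five, p0, p1]
    norm_num
  rw [this, show (4:ℝ) = 2^2 by norm_num, Real.sqrt_sq (by norm_num)]

lemma dist02 : eDist p0 p2 = Real.sqrt 5 := by
  unfold eDist
  congr 1
  simp [Fin.sum_univ_five, p0, p2]

lemma dist12 : eDist p1 p2 = Real.sqrt 5 := by
  unfold eDist
  congr 1
  simp [Fin.sum_univ_five, p1, p2]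
  norm_num

lemma sqrt5_pos : (0:ℝ) < Real.sqrt 5 := Real.sqrt_pos.mpr (by norm_num)

lemma ratio_mul : (2 / Real.sqrt 5) * Real.sqrt 5 = 2 := by
  field_simp

lemma f0 : f13 p0 = p0 := by simp [f13, ne02]
lemma f1 : f13 p1 = p0 := by simp [f13, ne12]
lemma f2 : f13 p2 = p1 := by simp [f13]

lemma mem0 : p0 ∈ X13 := Or.inl rfl
lemma mem1 : p1 ∈ X13 := Or.inr (Or.inl rfl)
lemma mem2 : p2 ∈ X13 := Or.inr (Or.inr rfl)

theorem stmt13 :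
    -- (i) the distances
    (eDist p0 p1 = 2 ∧ eDist p0 p2 = Real.sqrt 5 ∧ eDist p1 p2 = Real.sqrt 5) ∧
    -- (ii) X is c₅-connected and uniformly c₅-connected
    (∀ a ∈ X13, ∀ b ∈ X13,
      Relation.ReflTransGen (fun p q => p ∈ X13 ∧ q ∈ X13 ∧ cAdj 5 p q) a b) ∧
    (∀ a ∈ X13, ∀ b ∈ X13, cAdj 5 a b → eDist a b = Real.sqrt 5) ∧
    -- (iii) f is a digital contraction with ratio 2/√5 < 1, mapping X into X
    (Set.MapsTo f13 X13 X13) ∧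
    (∀ x ∈ X13, ∀ y ∈ X13, eDist (f13 x) (f13 y) ≤ (2 / Real.sqrt 5) * eDist x y) ∧
    (2 / Real.sqrt 5 < 1) ∧
    -- (iv) f is not c₅-continuous
    (¬ ∀ x ∈ X13, ∀ y ∈ X13, cAdj 5 x y → (f13 x = f13 y ∨ cAdj 5 (f13 x) (f13 y))) ∧
    -- (v) the image f(X) = {x₀, x₁} has exactly two elements
    (f13 '' X13 = {p0, p1} ∧ (f13 '' X13).ncard = 2) := by
  have step02 : Relation.ReflTransGen (fun p q => p ∈ X13 ∧ q ∈ X13 ∧ cAdj 5 p q) p0 p2 :=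
    Relation.ReflTransGen.single ⟨mem0, mem2, adj02⟩
  have step20 : Relation.ReflTransGen (fun p q => p ∈ X13 ∧ q ∈ X13 ∧ cAdj 5 p q) p2 p0 :=
    Relation.ReflTransGen.single ⟨mem2, mem0, adj20⟩
  have step12 : Relation.ReflTransGen (fun p q => p ∈ X13 ∧ q ∈ X13 ∧ cAdj 5 p q) p1 p2 :=
    Relation.ReflTransGen.single ⟨mem1, mem2, adj12⟩
  have step21 : Relation.ReflTransGen (fun p q => p ∈ X13 ∧ q ∈ X13 ∧ cAdj 5 p q) p2 p1 :=
    Relation.ReflTransGen.single ⟨mem2, mem1, adj21⟩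
  refine ⟨⟨dist01, dist02, dist12⟩, ?_, ?_, ?_, ?_, ?_, ?_, ?_, ?_⟩
  · rintro a (rfl | rfl | rfl) b (rfl | rfl | rfl)
    · exact .refl
    · exact step02.trans step21
    · exact step02
    · exact step12.trans step20
    · exact .refl
    · exact step12
    · exact step20
    · exact step21
    · exact .refl
  · rintro a (rfl | rfl | rfl) b (rfl | rfl | rfl) h
    · exact absurd h.1 (by simp)
    · exact absurd h nadj01
    · exact dist02
    · exact absurd h nadj10
    · exact absurd h.1 (by simp)
    · exact dist12
    · rw [eDist_comm]; exact dist02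
    · rw [eDist_comm]; exact dist12
    · exact absurd h.1 (by simp)
  · rintro a (rfl | rfl | rfl)
    · rw [f0]; exact mem0
    · rw [f1]; exact mem0
    · rw [f2]; exact mem1
  · have key : eDist p0 p1 ≤ (2 / Real.sqrt 5) * Real.sqrt 5 := by
      rw [ratio_mul, dist01]
    rintro x (rfl | rfl | rfl) y (rfl | rfl | rfl)
    · simp [eDist_self]
    · rw [f0, f1, eDist_self, dist01]
      positivity
    · rw [f0, f2, dist02]; exact key
    · rw [f0, f1, eDist_comm p1 p0, eDist_self, dist01]
      positivity
    · simp [eDist_self]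
    · rw [f1, f2, dist12]; exact key
    · rw [f0, f2, eDist_comm p2 p0, eDist_comm p1 p0, dist02]
      calc eDist p0 p1 ≤ (2 / Real.sqrt 5) * Real.sqrt 5 := key
      _ = _ := rfl
    · rw [f1, f2, eDist_comm p2 p1, eDist_comm p1 p0, dist12]
      exact key
    · simp [eDist_self]
  · rw [div_lt_one sqrt5_pos]
    nlinarith [Real.sq_sqrt (by norm_num : (5:ℝ) ≥ 0), sqrt5_pos]
  · intro h
    have := h p0 mem0 p2 mem2 adj02
    rw [f0, f2] at this
    rcases this with h' | h'
    · exact ne01 h'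
    · exact nadj01 h'
  · ext q
    simp only [Set.mem_image, Set.mem_insert_iff, Set.mem_singleton_iff]
    constructor
    · rintro ⟨p, (rfl | rfl | rfl), rfl⟩
      · rw [f0]; left; rfl
      · rw [f1]; left; rfl
      · rw [f2]; right; rfl
    · rintro (rfl | rfl)
      · exact ⟨p0, mem0, f0⟩
      · exact ⟨p2, mem2, f2⟩
  · have himg : f13 '' X13 = {p0, p1} := by
      ext q
      simp only [Set.mem_image, Set.mem_insert_iff, Set.mem_singleton_iff]
      constructor
      · rintro ⟨p, (rfl | rfl | rfl), rfl⟩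
        · rw [f0]; left; rfl
        · rw [f1]; left; rfl
        · rw [f2]; right; rfl
      · rintro (rfl | rfl)
        · exact ⟨p0, mem0, f0⟩
        · exact ⟨p2, mem2, f2⟩
    rw [himg, Set.ncard_pair ne01]
end

section
/- Let X ⊆ ℤⁿ be c₁-connected with the Euclidean metric d, and let f : X → X satisfy d(f x, f y) ≤ γ d(x,y) for all x, y ∈ X, for some γ ∈ [0,1). Then f is a constant function. -/
/-- `X` is `c₁`-connected. -/
def cConnected {n : ℕ} (u : ℕ) (X : Set (Fin n → ℤ)) : Prop :=
  ∀ a b : X, Relation.ReflTransGen (fun p q : X => cAdj u p.1 q.1) a b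

lemma eDist_ge_one {n : ℕ} {x y : Fin n → ℤ} (h : x ≠ y) : 1 ≤ eDist x y := by
  obtain ⟨i, hi⟩ := Function.ne_iff.mp h
  have h1 : (1 : ℝ) ≤ ((x i - y i : ℤ) : ℝ) ^ 2 := by
    have : (1 : ℤ) ≤ (x i - y i) ^ 2 := by
      have : x i - y i ≠ 0 := sub_ne_zero.mpr hi
      nlinarith [sq_abs (x i - y i), Int.one_le_abs this]
    have h2 : ((1:ℤ):ℝ) ≤ (((x i - y i)^2 : ℤ) : ℝ) := Int.cast_le.mpr this
    push_cast at h2 ⊢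
    linarith
  have h2 : ((x i - y i : ℤ) : ℝ) ^ 2 ≤ ∑ j, ((x j - y j : ℤ) : ℝ) ^ 2 :=
    Finset.single_le_sum (f := fun j => ((x j - y j : ℤ) : ℝ) ^ 2)
      (fun j _ => sq_nonneg _) (Finset.mem_univ i)
  unfold eDist
  rw [← Real.sqrt_one]
  exact Real.sqrt_le_sqrt (le_trans h1 h2)

lemma eDist_le_one_of_adj {n : ℕ} {x y : Fin n → ℤ} (h : cAdj 1 x y) :
    eDist x y ≤ 1 := by
  obtain ⟨-, hcard, heq⟩ := h
  have hsum : ∑ i, ((x i - y i : ℤ) : ℝ) ^ 2 ≤ 1 := by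
    have : ∑ i, ((x i - y i : ℤ) : ℝ) ^ 2
        = ∑ i ∈ Finset.univ.filter fun i => |x i - y i| = 1, ((x i - y i : ℤ) : ℝ) ^ 2 := by
      refine (Finset.sum_filter_of_ne ?_).symm
      intro i _ hne
      by_contra habs
      have := heq i habs
      simp [this] at hne
    rw [this]
    calc ∑ i ∈ Finset.univ.filter fun i => |x i - y i| = 1, ((x i - y i : ℤ) : ℝ) ^ 2
        = ∑ i ∈ Finset.univ.filter fun i => |x i - y i| = 1, (1 : ℝ) := by
          refine Finset.sum_congr rfl fun i hi => ?_
          have := (Finset.mem_filter.mp hi).2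
          have h2 : (x i - y i) ^ 2 = 1 := by nlinarith [sq_abs (x i - y i)]
          have h3 : (((x i - y i)^2 : ℤ) : ℝ) = ((1:ℤ):ℝ) := by exact_mod_cast congrArg (fun z : ℤ => (z : ℝ)) h2
          push_cast at h3 ⊢
          linarith
      _ = ((Finset.univ.filter fun i => |x i - y i| = 1).card : ℝ) := by simp
      _ ≤ 1 := by exact_mod_cast hcard
  unfold eDist
  rw [← Real.sqrt_one]
  exact Real.sqrt_le_sqrt hsum

/-- A digital contraction (w.r.t. the Euclidean metric) on a `c₁`-connected
digital image is constant. -/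
theorem stmt14 {n : ℕ} (X : Set (Fin n → ℤ)) (hconn : cConnected 1 X)
    (f : X → X) (γ : ℝ) (hγ0 : 0 ≤ γ) (hγ1 : γ < 1)
    (hf : ∀ x y : X, eDist (f x).1 (f y).1 ≤ γ * eDist x.1 y.1) :
    ∀ x y : X, f x = f y := by
  have step : ∀ p q : X, cAdj 1 p.1 q.1 → f p = f q := by
    intro p q hadj
    by_contra hne
    have hne' : (f p).1 ≠ (f q).1 := fun h => hne (Subtype.ext h)
    have h1 : (1 : ℝ) ≤ eDist (f p).1 (f q).1 := eDist_ge_one hne'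
    have h2 : eDist (f p).1 (f q).1 ≤ γ * eDist p.1 q.1 := hf p q
    have h3 : γ * eDist p.1 q.1 ≤ γ * 1 :=
      mul_le_mul_of_nonneg_left (eDist_le_one_of_adj hadj) hγ0
    linarith
  intro x y
  induction hconn x y with
  | refl => rfl
  | tail _ hadj ih => exact ih.trans (step _ _ hadj)
end
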